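/- arXiv:2206.08994 — 5 statements merged into one kernel-verified Lean document; each statement's English description precedes it below -/
import Mathlib

section
/- Let G be a group with bi-invariant metric d. Let g_{ij}*, g_{jk}*, g_{ki}* be ground-truth group ratios satisfying cycle consistency g_{ij}*·g_{jk}*·g_{ki}* = e, and let g_{ij}, g_{jk}, g_{ki} be observed elements with corruption levels s_{ij}* = d(g_{ij}, g_{ij}*), s_{jk}* = d(g_{jk}, g_{jk}*), s_{ki}* = d(g_{ki}, g_{ki}*). Define the cycle inconsistency d_{ij,k} = d(g_{ij}·g_{jk}·g_{ki}, e). Then |d_{ij,k} − s_{ij}*| ≤ s_{ik}* + s_{jk}*, where s_{ik}* = s_{ki}*. -/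
/-- cycle-inconsistency bound `|d_{ij,k} - s_{ij}*| ≤ s_{ik}* + s_{jk}*`,
where `s_{ik}* = s_{ki}* = d(g_{ki}, g_{ki}*)`. -/
theorem cycle_inconsistency_bound {G : Type*} [Group G] (d : G → G → ℝ)
    (hnonneg : ∀ a b : G, 0 ≤ d a b)
    (hsymm : ∀ a b : G, d a b = d b a)
    (htri : ∀ a b c : G, d a c ≤ d a b + d b c)
    (hsep : ∀ a b : G, d a b = 0 ↔ a = b)
    (hleft : ∀ a b c : G, d a b = d (c * a) (c * b))
    (hright : ∀ a b c : G, d a b = d (a * c) (b * c))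
    (gij gjk gki gijs gjks gkis : G)
    (hcycle : gijs * gjks * gkis = 1)
    (sij sjk ski sik dijk : ℝ)
    (hsij : sij = d gij gijs)
    (hsjk : sjk = d gjk gjks)
    (hski : ski = d gki gkis)
    (hsik : sik = ski)
    (hdijk : dijk = d (gij * gjk * gki) 1) :
    |dijk - sij| ≤ sik + sjk := by
  have key : ∀ a a' b b' c c' : G,
      d (a * b * c) (a' * b' * c') ≤ d a a' + d b b' + d c c' := by
    intro a a' b b' c c'
    have e1 : d (a * b * c) (a' * b * c) = d a a' := by
      rw [hright a a' b, hright (a*b) (a'*b) c]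
    have e2 : d (a' * b * c) (a' * b' * c) = d b b' := by
      rw [hleft b b' a', hright (a'*b) (a'*b') c]
    have e3 : d (a' * b' * c) (a' * b' * c') = d c c' := by
      rw [hleft c c' (a'*b')]
    calc d (a * b * c) (a' * b' * c')
        ≤ d (a * b * c) (a' * b * c) + d (a' * b * c) (a' * b' * c') :=
          htri _ _ _
      _ ≤ d (a * b * c) (a' * b * c) + (d (a' * b * c) (a' * b' * c)
            + d (a' * b' * c) (a' * b' * c')) := by
          gcongr; exact htri _ _ _
      _ = d a a' + d b b' + d c c' := by rw [e1, e2, e3]; ring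
  have hup : dijk ≤ sij + (sik + sjk) := by
    have : d (gij * gjk * gki) (gijs * gjks * gkis)
        ≤ d gij gijs + d gjk gjks + d gki gkis := key _ _ _ _ _ _
    rw [hcycle] at this
    rw [hdijk, hsij, hsik, hski, hsjk]
    linarith
  have hdown : sij ≤ dijk + (sik + sjk) := by
    have e0 : d gij gijs = d (gij * gjks * gkis) 1 := by
      rw [hright gij gijs gjks, hright (gij*gjks) (gijs*gjks) gkis, hcycle]
    have h1 : d (gij * gjks * gkis) (gij * gjk * gki)
        ≤ d gij gij + d gjks gjk + d gkis gki := key _ _ _ _ _ _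
    have h0 : d gij gij = 0 := (hsep gij gij).2 rfl
    have h2 : d (gij * gjks * gkis) 1
        ≤ d (gij * gjks * gkis) (gij * gjk * gki) + d (gij * gjk * gki) 1 :=
      htri _ _ _
    rw [hsij, e0, hdijk, hsik, hski, hsjk, hsymm gki gkis, hsymm gjk gjks]
    linarith
  rw [abs_sub_le_iff]
  constructor <;> linarith
end

section
/- (Exact recovery of DESC). Let E be a finite edge set of a graph on n nodes, partitioned into good edges E_g and bad edges E_b. For each ij ∈ E, let C_{ij} = {k : ik, jk ∈ E} and G_{ij} = {k : ik, jk ∈ E_g}, and let d_{ij,k} ≥ 0 be cycle inconsistencies satisfying: (a) d_{ij,k} = s_{ij}* whenever k ∈ G_{ij}, (b) s_{ij}* = 0 for ij ∈ E_g, (c) d_{ij,k} > 0 whenever at least one of ij, jk, ki ∈ E_b. Assume |G_{ij}| ≥ 1 for all ij ∈ E. Then any global minimizer {p_{ij}} of the objective f({p_{ij}}) = ∑_{ij∈E} ∑_{k∈C_{ij}} p_{ij}(k)·(p_{ik}ᵀ d_{ik} + p_{jk}ᵀ d_{jk}) over the product of simplices Δ(|C_{ij}|) satisfies p_{ij}ᵀ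 d_{ij} = s_{ij}* for all ij ∈ E. -/
/-- exact recovery of DESC. Any global minimizer of the DESC
quadratic objective over the product of simplices satisfies
`p_ijᵀ d_ij = s_ij*` for all edges `ij ∈ E`. -/
theorem desc_exact_recovery {V : Type*} [Fintype V] [DecidableEq V]
    (E Eg : Finset (V × V)) (hEgE : Eg ⊆ E)
    (hEsym : ∀ i j : V, (i, j) ∈ E → (j, i) ∈ E)
    (hEgsym : ∀ i j : V, (i, j) ∈ Eg → (j, i) ∈ Eg)
    (C : V × V → Finset V)
    (hC : ∀ i j : V, C (i, j) = Finset.univ.filter fun k => (i, k) ∈ E ∧ (j, k) ∈ E)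
    (dd : V × V → V → ℝ) (sstar : V × V → ℝ)
    (hd_nonneg : ∀ e k, 0 ≤ dd e k) (hd_le : ∀ e k, dd e k ≤ 1)
    (hs_nonneg : ∀ e, 0 ≤ sstar e) (hs_le : ∀ e, sstar e ≤ 1)
    -- (a) cycles through two good edges reveal the corruption level
    (hgood : ∀ i j : V, (i, j) ∈ E → ∀ k : V,
      (i, k) ∈ Eg → (j, k) ∈ Eg → dd (i, j) k = sstar (i, j))
    -- (b) good edges are uncorrupted
    (hgoodzero : ∀ e ∈ Eg, sstar e = 0)
    -- (c) cycles containing a bad edge have positive inconsistency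
    (hbad : ∀ i j : V, (i, j) ∈ E → ∀ k ∈ C (i, j),
      ((i, j) ∈ E \ Eg ∨ (j, k) ∈ E \ Eg ∨ (k, i) ∈ E \ Eg) → 0 < dd (i, j) k)
    -- |G_ij| ≥ 1 for every edge
    (hGne : ∀ i j : V, (i, j) ∈ E → ∃ k : V, (i, k) ∈ Eg ∧ (j, k) ∈ Eg)
    -- the DESC quadratic objective
    (f : (V × V → V → ℝ) → ℝ)
    (hf : ∀ q : V × V → V → ℝ, f q = ∑ e ∈ E, ∑ k ∈ C e, q e k *
      ((∑ l ∈ C (e.1, k), q (e.1, k) l * dd (e.1, k) l) +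
       (∑ l ∈ C (e.2, k), q (e.2, k) l * dd (e.2, k) l)))
    -- p is feasible (each p_e lies in the simplex Δ(|C_e|))
    (p : V × V → V → ℝ)
    (hp_nonneg : ∀ e ∈ E, ∀ k ∈ C e, 0 ≤ p e k)
    (hp_sum : ∀ e ∈ E, ∑ k ∈ C e, p e k = 1)
    -- p is a global minimizer over the product of simplices
    (hmin : ∀ q : V × V → V → ℝ,
      (∀ e ∈ E, ∀ k ∈ C e, 0 ≤ q e k) → (∀ e ∈ E, ∑ k ∈ C e, q e k = 1) →
      f p ≤ f q) :
    ∀ e ∈ E, ∑ k ∈ C e, p e k * dd e k = sstar e := by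
  classical
  have hCmem : ∀ (e : V × V) (k : V), k ∈ C e ↔ (e.1, k) ∈ E ∧ (e.2, k) ∈ E := by
    intro e k
    have := hC e.1 e.2
    rw [Prod.mk.eta] at this
    rw [this]; simp
  have hEe : ∀ e : V × V, e ∈ E → (e.1, e.2) ∈ E := by
    intro e he; rwa [Prod.mk.eta]
  -- the good-cycle selector
  set κ : V × V → V := fun e =>
    if h : e ∈ E then Classical.choose (hGne e.1 e.2 (hEe e h)) else e.1 with hκdef
  have hκ : ∀ e ∈ E, (e.1, κ e) ∈ Eg ∧ (e.2, κ e) ∈ Eg := by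
    intro e he
    simp only [hκdef, dif_pos he]
    exact Classical.choose_spec (hGne e.1 e.2 (hEe e he))
  have hκC : ∀ e ∈ E, κ e ∈ C e := by
    intro e he
    exact (hCmem e (κ e)).mpr ⟨hEgE (hκ e he).1, hEgE (hκ e he).2⟩
  set q : V × V → V → ℝ := fun e k => if k = κ e then 1 else 0 with hqdef
  have hq_nonneg : ∀ e ∈ E, ∀ k ∈ C e, 0 ≤ q e k := by
    intro e _ k _
    simp only [hqdef]
    split <;> norm_num
  have hq_sum : ∀ e ∈ E, ∑ k ∈ C e, q e k = 1 := by
    intro e he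
    simp only [hqdef]
    rw [Finset.sum_ite_eq' (C e) (κ e) (fun _ => (1 : ℝ))]
    simp [hκC e he]
  -- inner sums of q collapse to sstar
  have hSq : ∀ a : V × V, a ∈ E → ∑ l ∈ C a, q a l * dd a l = sstar a := by
    intro a ha
    have : ∑ l ∈ C a, q a l * dd a l = ∑ l ∈ C a, if l = κ a then dd a l else 0 := by
      apply Finset.sum_congr rfl
      intro l _
      simp only [hqdef]
      split <;> simp
    rw [this, Finset.sum_ite_eq' (C a) (κ a) (dd a), if_pos (hκC a ha)]
    have := hgood a.1 a.2 (hEe a ha) (κ a) (hκ a ha).1 (hκ a ha).2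
    rwa [Prod.mk.eta] at this
  -- f q = 0
  have hfq : f q = 0 := by
    rw [hf]
    apply Finset.sum_eq_zero
    intro e he
    apply Finset.sum_eq_zero
    intro k hk
    by_cases hkκ : k = κ e
    · rw [hkκ]
      have h1 : (e.1, κ e) ∈ Eg := (hκ e he).1
      have h2 : (e.2, κ e) ∈ Eg := (hκ e he).2
      rw [hSq (e.1, κ e) (hEgE h1), hSq (e.2, κ e) (hEgE h2),
        hgoodzero _ h1, hgoodzero _ h2]
      ring
    · simp [hqdef, hkκ]
  -- f p = 0
  have hfp0 : f p = 0 := by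
    have h1 : f p ≤ 0 := hfq ▸ hmin q hq_nonneg hq_sum
    have h2 : 0 ≤ f p := by
      rw [hf]
      apply Finset.sum_nonneg
      intro e he
      apply Finset.sum_nonneg
      intro k hk
      have hk1 : (e.1, k) ∈ E := ((hCmem e k).mp hk).1
      have hk2 : (e.2, k) ∈ E := ((hCmem e k).mp hk).2
      have hs1 : 0 ≤ ∑ l ∈ C (e.1, k), p (e.1, k) l * dd (e.1, k) l :=
        Finset.sum_nonneg fun l hl =>
          mul_nonneg (hp_nonneg _ hk1 l hl) (hd_nonneg _ l)
      have hs2 : 0 ≤ ∑ l ∈ C (e.2, k), p (e.2, k) l * dd (e.2, k) l :=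
        Finset.sum_nonneg fun l hl =>
          mul_nonneg (hp_nonneg _ hk2 l hl) (hd_nonneg _ l)
      exact mul_nonneg (hp_nonneg e he k hk) (by linarith)
    linarith
  -- nonnegativity of the inner sums S a
  have hSnn : ∀ a : V × V, a ∈ E → 0 ≤ ∑ l ∈ C a, p a l * dd a l :=
    fun a ha => Finset.sum_nonneg fun l hl =>
      mul_nonneg (hp_nonneg a ha l hl) (hd_nonneg a l)
  -- each term of f p vanishes
  have hterm : ∀ e ∈ E, ∀ k ∈ C e, p e k *
      ((∑ l ∈ C (e.1, k), p (e.1, k) l * dd (e.1, k) l) +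
       (∑ l ∈ C (e.2, k), p (e.2, k) l * dd (e.2, k) l)) = 0 := by
    have houter : ∀ e ∈ E, ∑ k ∈ C e, p e k *
        ((∑ l ∈ C (e.1, k), p (e.1, k) l * dd (e.1, k) l) +
         (∑ l ∈ C (e.2, k), p (e.2, k) l * dd (e.2, k) l)) = 0 := by
      rw [hf] at hfp0
      intro e he
      refine (Finset.sum_eq_zero_iff_of_nonneg ?_).mp hfp0 e he
      intro a ha
      apply Finset.sum_nonneg
      intro k hk
      have hk1 : (a.1, k) ∈ E := ((hCmem a k).mp hk).1
      have hk2 : (a.2, k) ∈ E := ((hCmem a k).mp hk).2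
      exact mul_nonneg (hp_nonneg a ha k hk)
        (add_nonneg (hSnn _ hk1) (hSnn _ hk2))
    intro e he k hk
    refine (Finset.sum_eq_zero_iff_of_nonneg ?_).mp (houter e he) k hk
    intro a ha
    have ha1 : (e.1, a) ∈ E := ((hCmem e a).mp ha).1
    have ha2 : (e.2, a) ∈ E := ((hCmem e a).mp ha).2
    exact mul_nonneg (hp_nonneg e he a ha)
      (add_nonneg (hSnn _ ha1) (hSnn _ ha2))
  -- a bad edge has strictly positive inner sum
  have hSpos : ∀ a : V × V, a ∈ E → a ∉ Eg →
      0 < ∑ l ∈ C a, p a l * dd a l := by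
    intro a ha hag
    have hsum := hp_sum a ha
    have hex : ∃ l ∈ C a, 0 < p a l := by
      by_contra hcon
      push_neg at hcon
      have : ∑ l ∈ C a, p a l = 0 := Finset.sum_eq_zero fun l hl =>
        le_antisymm (hcon l hl) (hp_nonneg a ha l hl)
      rw [this] at hsum; norm_num at hsum
    obtain ⟨l, hl, hpl⟩ := hex
    have hdl : 0 < dd a l := by
      have hl' : l ∈ C (a.1, a.2) := by rwa [Prod.mk.eta]
      have := hbad a.1 a.2 (hEe a ha) l hl'
        (Or.inl (Finset.mem_sdiff.mpr ⟨hEe a ha, by rwa [Prod.mk.eta]⟩))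
      rwa [Prod.mk.eta] at this
    refine Finset.sum_pos' ?_ ⟨l, hl, mul_pos hpl hdl⟩
    intro i hi
    exact mul_nonneg (hp_nonneg a ha i hi) (hd_nonneg a i)
  -- on the support of p e, dd e k = sstar e
  have hsupp : ∀ e ∈ E, ∀ k ∈ C e, 0 < p e k → dd e k = sstar e := by
    intro e he k hk hpk
    have hk1 : (e.1, k) ∈ E := ((hCmem e k).mp hk).1
    have hk2 : (e.2, k) ∈ E := ((hCmem e k).mp hk).2
    have hzero := hterm e he k hk
    have hsum0 : (∑ l ∈ C (e.1, k), p (e.1, k) l * dd (e.1, k) l) +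
        (∑ l ∈ C (e.2, k), p (e.2, k) l * dd (e.2, k) l) = 0 := by
      rcases mul_eq_zero.mp hzero with h | h
      · exact absurd h (ne_of_gt hpk)
      · exact h
    have hS1 : ∑ l ∈ C (e.1, k), p (e.1, k) l * dd (e.1, k) l = 0 := by
      have := hSnn _ hk1; have := hSnn _ hk2; linarith
    have hS2 : ∑ l ∈ C (e.2, k), p (e.2, k) l * dd (e.2, k) l = 0 := by
      have := hSnn _ hk1; have := hSnn _ hk2; linarith
    have hg1 : (e.1, k) ∈ Eg := by
      by_contra hcon
      exact absurd hS1 (ne_of_gt (hSpos _ hk1 hcon))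
    have hg2 : (e.2, k) ∈ Eg := by
      by_contra hcon
      exact absurd hS2 (ne_of_gt (hSpos _ hk2 hcon))
    have := hgood e.1 e.2 (hEe e he) k hg1 hg2
    rwa [Prod.mk.eta] at this
  -- conclude
  intro e he
  have : ∑ k ∈ C e, p e k * dd e k = ∑ k ∈ C e, p e k * sstar e := by
    apply Finset.sum_congr rfl
    intro k hk
    rcases eq_or_lt_of_le (hp_nonneg e he k hk) with h | h
    · rw [← h]; ring
    · rw [hsupp e he k hk h]
  rw [this, ← Finset.sum_mul, hp_sum e he, one_mul]
end

section
/- Under the hypotheses of the DESC exact-recovery theorem, the minimum value of the quadratic objective f over the product of simplices is 0, achieved by setting p_{ij}(k) = 1/|G_{ij}| for k ∈ G_{ij} and 0 otherwise. -/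
/-- under the DESC exact-recovery hypotheses, the minimum value of
the quadratic objective over the product of simplices is `0`, attained by the
uniform distribution on the good cycles `G_ij`. -/
theorem desc_min_value_zero {V : Type*} [Fintype V] [DecidableEq V]
    (E Eg : Finset (V × V)) (hEgE : Eg ⊆ E)
    (hEsym : ∀ i j : V, (i, j) ∈ E → (j, i) ∈ E)
    (hEgsym : ∀ i j : V, (i, j) ∈ Eg → (j, i) ∈ Eg)
    (C : V × V → Finset V)
    (hC : ∀ i j : V, C (i, j) = Finset.univ.filter fun k => (i, k) ∈ E ∧ (j, k) ∈ E)
    (dd : V × V → V → ℝ) (sstar : V × V → ℝ)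
    (hd_nonneg : ∀ e k, 0 ≤ dd e k) (hd_le : ∀ e k, dd e k ≤ 1)
    (hs_nonneg : ∀ e, 0 ≤ sstar e) (hs_le : ∀ e, sstar e ≤ 1)
    (hgood : ∀ i j : V, (i, j) ∈ E → ∀ k : V,
      (i, k) ∈ Eg → (j, k) ∈ Eg → dd (i, j) k = sstar (i, j))
    (hgoodzero : ∀ e ∈ Eg, sstar e = 0)
    (hbad : ∀ i j : V, (i, j) ∈ E → ∀ k ∈ C (i, j),
      ((i, j) ∈ E \ Eg ∨ (j, k) ∈ E \ Eg ∨ (k, i) ∈ E \ Eg) → 0 < dd (i, j) k)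
    (hGne : ∀ i j : V, (i, j) ∈ E → ∃ k : V, (i, k) ∈ Eg ∧ (j, k) ∈ Eg)
    (f : (V × V → V → ℝ) → ℝ)
    (hf : ∀ q : V × V → V → ℝ, f q = ∑ e ∈ E, ∑ k ∈ C e, q e k *
      ((∑ l ∈ C (e.1, k), q (e.1, k) l * dd (e.1, k) l) +
       (∑ l ∈ C (e.2, k), q (e.2, k) l * dd (e.2, k) l)))
    -- `p0` is the uniform distribution over the good cycles `G_ij`
    (p0 : V × V → V → ℝ)
    (hp0 : ∀ (e : V × V) (k : V), p0 e k =
      if (e.1, k) ∈ Eg ∧ (e.2, k) ∈ Eg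
      then (1 : ℝ) / ((Finset.univ.filter fun l : V =>
        (e.1, l) ∈ Eg ∧ (e.2, l) ∈ Eg).card : ℝ)
      else 0) :
    (∀ e ∈ E, ∀ k ∈ C e, 0 ≤ p0 e k) ∧ (∀ e ∈ E, ∑ k ∈ C e, p0 e k = 1) ∧
      f p0 = 0 ∧
      (∀ q : V × V → V → ℝ,
        (∀ e ∈ E, ∀ k ∈ C e, 0 ≤ q e k) → (∀ e ∈ E, ∑ k ∈ C e, q e k = 1) →
        0 ≤ f q) := by

  have hGsub : ∀ e : V × V, e ∈ E →
      (Finset.univ.filter fun l : V => (e.1, l) ∈ Eg ∧ (e.2, l) ∈ Eg) ⊆ C e := by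
    intro e he l hl
    simp only [Finset.mem_filter] at hl
    rw [show e = (e.1, e.2) from rfl, hC e.1 e.2]
    simp [hEgE hl.2.1, hEgE hl.2.2]
  have hcard : ∀ e : V × V, e ∈ E →
      ((Finset.univ.filter fun l : V => (e.1, l) ∈ Eg ∧ (e.2, l) ∈ Eg).card : ℝ) ≠ 0 := by
    intro e he
    obtain ⟨k, h1, h2⟩ := hGne e.1 e.2 (by rwa [show (e.1, e.2) = e from rfl])
    have : k ∈ (Finset.univ.filter fun l : V => (e.1, l) ∈ Eg ∧ (e.2, l) ∈ Eg) := by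
      simp [h1, h2]
    have := Finset.card_pos.mpr ⟨k, this⟩
    positivity
  refine ⟨?_, ?_, ?_, ?_⟩
  · intro e he k hk
    rw [hp0]
    split
    · positivity
    · exact le_rfl
  · intro e he
    set G := Finset.univ.filter fun l : V => (e.1, l) ∈ Eg ∧ (e.2, l) ∈ Eg with hG
    have h1 : ∑ k ∈ C e, p0 e k = ∑ k ∈ G, p0 e k := by
      refine (Finset.sum_subset (hGsub e he) ?_).symm
      intro k _ hkG
      rw [hp0, if_neg]
      intro h
      exact hkG (by simp [hG, h.1, h.2])
    rw [h1]
    have h2 : ∑ k ∈ G, p0 e k = ∑ k ∈ G, (1 / (G.card : ℝ)) := by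
      refine Finset.sum_congr rfl fun k hk => ?_
      simp only [hG, Finset.mem_filter] at hk
      rw [hp0, if_pos ⟨hk.2.1, hk.2.2⟩]
    rw [h2, Finset.sum_const, nsmul_eq_mul]
    exact mul_one_div_cancel (hcard e he)
  · rw [hf]
    refine Finset.sum_eq_zero fun e he => Finset.sum_eq_zero fun k hk => ?_
    have hz : ∀ a b : V, (a, b) ∈ Eg →
        ∑ l ∈ C (a, b), p0 (a, b) l * dd (a, b) l = 0 := by
      intro a b hab
      refine Finset.sum_eq_zero fun l hl => ?_
      by_cases hc : (a, l) ∈ Eg ∧ (b, l) ∈ Eg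
      · rw [hgood a b (hEgE hab) l hc.1 hc.2, hgoodzero _ hab, mul_zero]
      · rw [hp0, if_neg hc, zero_mul]
    by_cases h : (e.1, k) ∈ Eg ∧ (e.2, k) ∈ Eg
    · rw [hz e.1 k h.1, hz e.2 k h.2]
      ring
    · rw [hp0, if_neg h, zero_mul]
  · intro q hq0 hq1
    rw [hf]
    refine Finset.sum_nonneg fun e he => Finset.sum_nonneg fun k hk => ?_
    have hmem : (e.1, k) ∈ E ∧ (e.2, k) ∈ E := by
      have h := hC e.1 e.2
      rw [show (e.1, e.2) = e from rfl] at h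
      rw [h] at hk
      simpa using hk
    refine mul_nonneg (hq0 e he k hk) (add_nonneg ?_ ?_)
    · exact Finset.sum_nonneg fun l hl => mul_nonneg (hq0 _ hmem.1 l hl) (hd_nonneg _ _)
    · exact Finset.sum_nonneg fun l hl => mul_nonneg (hq0 _ hmem.2 l hl) (hd_nonneg _ _)
end

section
/- Under the hypotheses of the DESC exact-recovery theorem, any global minimizer {p_{ij}} of the quadratic objective must have support contained in G_{ij} for every ij ∈ E; that is, p_{ij}(k) = 0 for all k ∉ G_{ij}. -/
lemma desc_aux_sum_mul_pos {V : Type*} {s : Finset V} (g h : V → ℝ)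
    (hg : ∀ l ∈ s, 0 ≤ g l) (hh : ∀ l ∈ s, 0 < h l)
    (hsum : ∑ l ∈ s, g l = 1) : 0 < ∑ l ∈ s, g l * h l := by
  obtain ⟨l, hl, hgl⟩ : ∃ l ∈ s, g l ≠ 0 := by
    by_contra hcon
    push_neg at hcon
    rw [Finset.sum_eq_zero hcon] at hsum
    norm_num at hsum
  have hgl' : 0 < g l := lt_of_le_of_ne (hg l hl) (Ne.symm hgl)
  have : 0 < g l * h l := mul_pos hgl' (hh l hl)
  calc (0:ℝ) < g l * h l := this
    _ ≤ ∑ l ∈ s, g l * h l :=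
      Finset.single_le_sum (fun i hi => mul_nonneg (hg i hi) (hh i hi).le) hl

/-- under the DESC exact-recovery hypotheses, any global minimizer
of the quadratic objective has support contained in `G_ij` for every edge. -/
theorem desc_minimizer_support {V : Type*} [Fintype V] [DecidableEq V]
    (E Eg : Finset (V × V)) (hEgE : Eg ⊆ E)
    (hEsym : ∀ i j : V, (i, j) ∈ E → (j, i) ∈ E)
    (hEgsym : ∀ i j : V, (i, j) ∈ Eg → (j, i) ∈ Eg)
    (C : V × V → Finset V)
    (hC : ∀ i j : V, C (i, j) = Finset.univ.filter fun k => (i, k) ∈ E ∧ (j, k) ∈ E)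
    (dd : V × V → V → ℝ) (sstar : V × V → ℝ)
    (hd_nonneg : ∀ e k, 0 ≤ dd e k) (hd_le : ∀ e k, dd e k ≤ 1)
    (hs_nonneg : ∀ e, 0 ≤ sstar e) (hs_le : ∀ e, sstar e ≤ 1)
    (hgood : ∀ i j : V, (i, j) ∈ E → ∀ k : V,
      (i, k) ∈ Eg → (j, k) ∈ Eg → dd (i, j) k = sstar (i, j))
    (hgoodzero : ∀ e ∈ Eg, sstar e = 0)
    (hbad : ∀ i j : V, (i, j) ∈ E → ∀ k ∈ C (i, j),
      ((i, j) ∈ E \ Eg ∨ (j, k) ∈ E \ Eg ∨ (k, i) ∈ E \ Eg) → 0 < dd (i, j) k)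
    (hGne : ∀ i j : V, (i, j) ∈ E → ∃ k : V, (i, k) ∈ Eg ∧ (j, k) ∈ Eg)
    (f : (V × V → V → ℝ) → ℝ)
    (hf : ∀ q : V × V → V → ℝ, f q = ∑ e ∈ E, ∑ k ∈ C e, q e k *
      ((∑ l ∈ C (e.1, k), q (e.1, k) l * dd (e.1, k) l) +
       (∑ l ∈ C (e.2, k), q (e.2, k) l * dd (e.2, k) l)))
    (p : V × V → V → ℝ)
    (hp_nonneg : ∀ e ∈ E, ∀ k ∈ C e, 0 ≤ p e k)
    (hp_sum : ∀ e ∈ E, ∑ k ∈ C e, p e k = 1)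
    (hmin : ∀ q : V × V → V → ℝ,
      (∀ e ∈ E, ∀ k ∈ C e, 0 ≤ q e k) → (∀ e ∈ E, ∑ k ∈ C e, q e k = 1) →
      f p ≤ f q) :
    ∀ e ∈ E, ∀ k ∈ C e, ¬((e.1, k) ∈ Eg ∧ (e.2, k) ∈ Eg) → p e k = 0 := by
  classical
  -- membership in C
  have hCmem : ∀ (e : V × V) (k : V), k ∈ C e ↔ (e.1, k) ∈ E ∧ (e.2, k) ∈ E := by
    intro e k
    have := hC e.1 e.2
    rw [show C e = C (e.1, e.2) from rfl, this]
    simp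
  -- the good set
  set S : V × V → Finset V :=
    fun e => Finset.univ.filter fun k => (e.1, k) ∈ Eg ∧ (e.2, k) ∈ Eg with hSdef
  have hSmem : ∀ (e : V × V) (k : V), k ∈ S e ↔ (e.1, k) ∈ Eg ∧ (e.2, k) ∈ Eg := by
    intro e k; simp [hSdef]
  have hSsub : ∀ e, S e ⊆ C e := by
    intro e k hk
    rw [hSmem] at hk
    rw [hCmem]
    exact ⟨hEgE hk.1, hEgE hk.2⟩
  have hSne : ∀ e ∈ E, (S e).Nonempty := by
    intro e he
    obtain ⟨k, hk1, hk2⟩ := hGne e.1 e.2 (by simpa using he)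
    exact ⟨k, (hSmem e k).2 ⟨hk1, hk2⟩⟩
  -- candidate q : uniform on S e
  set q : V × V → V → ℝ :=
    fun e k => if k ∈ S e then (1 : ℝ) / (S e).card else 0 with hqdef
  have hq_nonneg : ∀ e ∈ E, ∀ k ∈ C e, 0 ≤ q e k := by
    intro e _ k _
    simp only [hqdef]
    split <;> positivity
  have hq_sum : ∀ e ∈ E, ∑ k ∈ C e, q e k = 1 := by
    intro e he
    have hcard : ((S e).card : ℝ) ≠ 0 := by
      have := (hSne e he).card_pos
      positivity
    simp only [hqdef]
    rw [Finset.sum_ite_mem, Finset.inter_eq_right.2 (hSsub e), Finset.sum_const,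
      nsmul_eq_mul]
    field_simp
  -- f q = 0
  have hinnerzero : ∀ (a : V × V), a ∈ Eg →
      ∑ l ∈ C a, q a l * dd a l = 0 := by
    intro a ha
    apply Finset.sum_eq_zero
    intro l hl
    by_cases hlS : l ∈ S a
    · have hl' := (hSmem a l).1 hlS
      have : dd (a.1, a.2) l = sstar (a.1, a.2) :=
        hgood a.1 a.2 (by simpa using hEgE ha) l hl'.1 hl'.2
      rw [show a = (a.1, a.2) from rfl, this, hgoodzero _ (by simpa using ha), mul_zero]
    · simp [hqdef, hlS]
  have hfq : f q = 0 := by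
    rw [hf]
    apply Finset.sum_eq_zero
    intro e he
    apply Finset.sum_eq_zero
    intro k hk
    by_cases hkS : k ∈ S e
    · have hk' := (hSmem e k).1 hkS
      rw [hinnerzero (e.1, k) hk'.1, hinnerzero (e.2, k) hk'.2]
      ring
    · simp [hqdef, hkS]
  -- f p ≥ 0, each term nonneg
  have hterm_nonneg : ∀ e ∈ E, ∀ k ∈ C e, 0 ≤ p e k *
      ((∑ l ∈ C (e.1, k), p (e.1, k) l * dd (e.1, k) l) +
       (∑ l ∈ C (e.2, k), p (e.2, k) l * dd (e.2, k) l)) := by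
    intro e he k hk
    have hk' := (hCmem e k).1 hk
    apply mul_nonneg (hp_nonneg e he k hk)
    apply add_nonneg <;>
      exact Finset.sum_nonneg fun l hl =>
        mul_nonneg (hp_nonneg _ (by first | exact hk'.1 | exact hk'.2) l hl)
          (hd_nonneg _ l)
  have hfp_nonneg : 0 ≤ f p := by
    rw [hf]
    apply Finset.sum_nonneg
    intro e he
    exact Finset.sum_nonneg fun k hk => hterm_nonneg e he k hk
  have hfp : f p = 0 := le_antisymm (hfq ▸ hmin q hq_nonneg hq_sum) hfp_nonneg
  -- each term of f p is zero
  have houter : ∀ e ∈ E, ∑ k ∈ C e, p e k *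
      ((∑ l ∈ C (e.1, k), p (e.1, k) l * dd (e.1, k) l) +
       (∑ l ∈ C (e.2, k), p (e.2, k) l * dd (e.2, k) l)) = 0 := by
    rw [hf] at hfp
    exact fun e he => (Finset.sum_eq_zero_iff_of_nonneg fun e' he' =>
      Finset.sum_nonneg fun k hk => hterm_nonneg e' he' k hk).1 hfp e he
  have hterm : ∀ e ∈ E, ∀ k ∈ C e, p e k *
      ((∑ l ∈ C (e.1, k), p (e.1, k) l * dd (e.1, k) l) +
       (∑ l ∈ C (e.2, k), p (e.2, k) l * dd (e.2, k) l)) = 0 := by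
    intro e he k hk
    exact (Finset.sum_eq_zero_iff_of_nonneg fun k' hk' =>
      hterm_nonneg e he k' hk').1 (houter e he) k hk
  -- conclusion
  intro e he k hk hnot
  have hk' := (hCmem e k).1 hk
  -- show the bracket is positive
  have hposbracket : 0 <
      (∑ l ∈ C (e.1, k), p (e.1, k) l * dd (e.1, k) l) +
      (∑ l ∈ C (e.2, k), p (e.2, k) l * dd (e.2, k) l) := by
    have hnn1 : 0 ≤ ∑ l ∈ C (e.1, k), p (e.1, k) l * dd (e.1, k) l :=
      Finset.sum_nonneg fun l hl =>
        mul_nonneg (hp_nonneg _ hk'.1 l hl) (hd_nonneg _ l)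
    have hnn2 : 0 ≤ ∑ l ∈ C (e.2, k), p (e.2, k) l * dd (e.2, k) l :=
      Finset.sum_nonneg fun l hl =>
        mul_nonneg (hp_nonneg _ hk'.2 l hl) (hd_nonneg _ l)
    rcases not_and_or.1 hnot with hbad1 | hbad2
    · have hpos : 0 < ∑ l ∈ C (e.1, k), p (e.1, k) l * dd (e.1, k) l := by
        apply desc_aux_sum_mul_pos _ _ (fun l hl => hp_nonneg _ hk'.1 l hl)
          (fun l hl => hbad e.1 k hk'.1 l hl (Or.inl (Finset.mem_sdiff.2 ⟨hk'.1, hbad1⟩)))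
          (hp_sum _ hk'.1)
      linarith
    · have hpos : 0 < ∑ l ∈ C (e.2, k), p (e.2, k) l * dd (e.2, k) l := by
        apply desc_aux_sum_mul_pos _ _ (fun l hl => hp_nonneg _ hk'.2 l hl)
          (fun l hl => hbad e.2 k hk'.2 l hl (Or.inl (Finset.mem_sdiff.2 ⟨hk'.2, hbad2⟩)))
          (hp_sum _ hk'.2)
      linarith
  have := hterm e he k hk
  rcases mul_eq_zero.1 this with h | h
  · exact h
  · exact absurd h (ne_of_gt hposbracket)
end

section
/- The point p defined by p_k = max(y_k − τ*, 0), where τ* solves ∑_k max(y_k − τ*, 0) = 1, is the Euclidean projection of y onto the simplex Δ(m); i.e., p minimizes ‖x − y‖₂ over x ∈ Δ(m). -/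
lemma euclid_normsq {m : ℕ} (v : EuclideanSpace ℝ (Fin m)) :
    ‖v‖ ^ 2 = ∑ k, (v k) ^ 2 := by
  rw [EuclideanSpace.norm_eq, Real.sq_sqrt (by positivity)]
  simp [sq_abs]

/-- the soft-thresholded vector `p k = max (y k - τ*) 0`, where
`τ*` solves `∑ k, max (y k - τ*) 0 = 1`, is the Euclidean projection of `y`
onto the probability simplex `Δ(m)`. -/
theorem simplex_projection_formula {m : ℕ}
    (y p : EuclideanSpace ℝ (Fin m)) (τstar : ℝ)
    (hτ : ∑ k, max (y k - τstar) 0 = 1)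
    (hp : ∀ k, p k = max (y k - τstar) 0) :
    ((∀ k, 0 ≤ p k) ∧ ∑ k, p k = 1) ∧
      ∀ x : EuclideanSpace ℝ (Fin m),
        (∀ k, 0 ≤ x k) → (∑ k, x k = 1) → ‖p - y‖ ≤ ‖x - y‖ := by
  have hsum : ∑ k, p k = 1 := by simp only [hp]; exact hτ
  refine ⟨⟨fun k => by rw [hp]; exact le_max_right _ _, hsum⟩, fun x hx hxs => ?_⟩
  have key : ∀ k, (p k - y k) ^ 2 + (-2 * τstar) * (x k - p k) ≤ (x k - y k) ^ 2 := by
    intro k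
    rcases le_or_gt τstar (y k) with h | h
    · have : p k = y k - τstar := by rw [hp]; exact max_eq_left (by linarith)
      rw [this]; nlinarith [sq_nonneg (x k - (y k - τstar))]
    · have : p k = 0 := by rw [hp]; exact max_eq_right (by linarith)
      rw [this]; nlinarith [sq_nonneg (x k), hx k]
  have hsq : ‖p - y‖ ^ 2 ≤ ‖x - y‖ ^ 2 := by
    rw [euclid_normsq, euclid_normsq]
    have h1 : ∑ k, ((p k - y k) ^ 2 + (-2 * τstar) * (x k - p k)) ≤
        ∑ k, (x k - y k) ^ 2 := Finset.sum_le_sum fun k _ => key k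
    have h2 : ∑ k, ((p k - y k) ^ 2 + (-2 * τstar) * (x k - p k))
        = ∑ k, (p k - y k) ^ 2 + (-2 * τstar) * (∑ k, x k - ∑ k, p k) := by
      rw [Finset.sum_add_distrib, ← Finset.mul_sum, Finset.sum_sub_distrib]
    rw [h2, hxs, hsum] at h1
    simpa using h1
  nlinarith [norm_nonneg (p - y), norm_nonneg (x - y)]
end
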